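/- Let n be a positive integer and let a, r, s be non-negative integers with a ≤ n. Then Σ_{k=a}^{n} q^{−(2r+1)k}·[2k+1]^{2r+1}·qbinom(2n+1, n−k)·(q^{−k};q)_s·(q^{k+1};q)_s is divisible by [2n+1]·qbinom(2n, n−a) in the ring of Laurent polynomials ℤ[q, q⁻¹]; that is, the quotient is a Laurent polynomial in q with integer coefficients. -/

import Mathlib

open Polynomial

/-- The Gaussian (`q`-)binomial coefficient `qbinom n k` as a polynomial in `q = X`
with integer coefficients; it is `0` for `k > n`. -/
noncomputable def qbinom : ℕ → ℕ → Polynomial ℤ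
  | _, 0 => 1
  | 0, _ + 1 => 0
  | n + 1, k + 1 => qbinom n k + X ^ (k + 1) * qbinom n (k + 1)

/-- The `q`-integer `[n] = 1 + q + ⋯ + q^{n-1}` as a polynomial in `q = X`. -/
noncomputable def qint (n : ℕ) : Polynomial ℤ := ∑ i ∈ Finset.range n, X ^ i

/-- The canonical map from `ℤ[q]` into its fraction field. -/
noncomputable def toK (p : Polynomial ℤ) : FractionRing (Polynomial ℤ) :=
  algebraMap (Polynomial ℤ) (FractionRing (Polynomial ℤ)) p

/-- The image of `q = X` in the fraction field of `ℤ[q]`. -/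
noncomputable def q : FractionRing (Polynomial ℤ) := toK X

/-- The `q`-shifted factorial `(q^e; q)_s = (1-q^e)(1-q^{e+1})⋯(1-q^{e+s-1})`,
where `e` may be a negative integer. -/
noncomputable def qpoch (e : ℤ) (s : ℕ) : FractionRing (Polynomial ℤ) :=
  ∏ i ∈ Finset.range s, (1 - q ^ (e + (i : ℤ)))

/-!
Put `x = q^k`, so that `skewMon j k = x^(-j) - (q x)^j` and `symMon k = x⁻¹ + q x`. Apart from the
factor `qbinom (2n+1) (n-k)`, `(1-q)^(2r+1)` times the `k`-th summand is
`skewMon 1 * (symMon ^ 2 - 4q)^r * ∏_{i<s} (1 + q^(2i+1) - q^i symMon)`, because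
`skewMon 1 ^ 2 = symMon ^ 2 - 4q` and `(1 - q^i x⁻¹)(1 - q^(i+1) x) = 1 + q^(2i+1) - q^i symMon`.
As `symMon * skewMon (j+1) = skewMon (j+2) + q skewMon j`, this is a combination of the `skewMon j`
with Laurent coefficients. Each `skewMon j` is `qdiff n ρ` for a Laurent-valued `ρ`, by induction on
`j`: `qdiff n 1 = q^n skewMon 1`, and `qdiff n (x^(m+1) + x^(-m-1))` is `skewMon (m+2)` up to a unit,
plus a Laurent combination of `skewMon (m+1)` and `skewMon m`.
Against `qbinom (2n+1) (n-k)` the operator telescopes: `qdiff n ρ k * qbinom (2n+1) (n-k)` is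
`T k - T (k+1)` with `T k = (1 - q^(2n+1)) qbinom (2n) (n-k) ρ k`. So `(1-q)^(2r)` times the sum is
`[2n+1] qbinom (2n) (n-a)` times a Laurent polynomial, and `(1-q)^(2r)` cancels because
`[2n+1] qbinom (2n) (n-a)` vanishes neither at `q = 0` nor at `q = 1`.
-/

local notation "K" => FractionRing ℤ[X]

@[simp] lemma toK_zero : toK 0 = 0 := map_zero _
@[simp] lemma toK_one : toK 1 = 1 := map_one _
@[simp] lemma toK_mul (p₁ p₂ : ℤ[X]) : toK (p₁ * p₂) = toK p₁ * toK p₂ := map_mul _ _ _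
@[simp] lemma toK_sub (p₁ p₂ : ℤ[X]) : toK (p₁ - p₂) = toK p₁ - toK p₂ := map_sub _ _ _
@[simp] lemma toK_pow (p : ℤ[X]) (m : ℕ) : toK (p ^ m) = toK p ^ m := map_pow _ _ _
@[simp] lemma toK_X : toK X = q := rfl

lemma toK_injective : Function.Injective toK := IsFractionRing.injective ℤ[X] K

lemma q_ne_zero : q ≠ 0 := by
  simpa using toK_injective.ne (X_ne_zero (R := ℤ))

lemma eval₂_q (p : ℤ[X]) : p.eval₂ (algebraMap ℤ K) q = toK p :=
  eval₂_algebraMap_X p (IsScalarTower.toAlgHom ℤ ℤ[X] K)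

noncomputable def laurent : Subring K :=
  (LaurentPolynomial.eval₂ (algebraMap ℤ K) (Units.mk0 q q_ne_zero)).range

lemma zpow_q_mem_laurent (m : ℤ) : q ^ m ∈ laurent :=
  ⟨LaurentPolynomial.T m, by simp⟩

lemma pow_q_mem_laurent (m : ℕ) : q ^ m ∈ laurent := by
  simpa using zpow_q_mem_laurent m

lemma q_mem_laurent : q ∈ laurent := by
  simpa using pow_q_mem_laurent 1

lemma inv_zpow_q_mem_laurent (k : ℤ) : (q ^ k)⁻¹ ∈ laurent := by
  simpa [zpow_neg] using zpow_q_mem_laurent (-k)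

lemma toK_mem_laurent (p : ℤ[X]) : toK p ∈ laurent :=
  ⟨p.toLaurent, by simp [eval₂_q]⟩

lemma qpoch_mem_laurent (e : ℤ) (s : ℕ) : qpoch e s ∈ laurent :=
  prod_mem fun _ _ => sub_mem (one_mem _) (zpow_q_mem_laurent _)

lemma exists_eq_toK_mul_zpow_q {z : K} (hz : z ∈ laurent) :
    ∃ (P : ℤ[X]) (d : ℕ), z = toK P * q ^ (-(d : ℤ)) := by
  obtain ⟨f, rfl⟩ := hz
  induction f using LaurentPolynomial.induction_on_mul_T with
  | mul_T P d => exact ⟨P, d, by simp [eval₂_q]⟩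

lemma qbinom_zero_right (n : ℕ) : qbinom n 0 = 1 := by
  cases n <;> rfl

lemma qbinom_succ_succ (n k : ℕ) :
    qbinom (n + 1) (k + 1) = qbinom n k + X ^ (k + 1) * qbinom n (k + 1) := rfl

lemma qbinom_eq_zero_of_lt {n k : ℕ} (h : n < k) : qbinom n k = 0 := by
  induction n generalizing k with
  | zero => obtain ⟨k, rfl⟩ := Nat.exists_eq_succ_of_ne_zero h.ne'; rfl
  | succ n ih =>
    obtain ⟨k, rfl⟩ := Nat.exists_eq_succ_of_ne_zero (Nat.ne_zero_of_lt h)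
    rw [qbinom_succ_succ, ih (by omega), ih (by omega), mul_zero, add_zero]

lemma one_sub_X_pow_ne_zero {R : Type*} [CommRing R] [Nontrivial R] {m : ℕ} (hm : 0 < m) :
    (1 - X ^ m : R[X]) ≠ 0 := by
  intro h
  simpa [hm.ne'] using congrArg (eval 0) h

lemma one_sub_X_mul_qbinom_one (n : ℕ) : (1 - X) * qbinom n 1 = 1 - X ^ n := by
  induction n with
  | zero => rw [qbinom_eq_zero_of_lt zero_lt_one]; ring
  | succ n ih =>
    rw [qbinom_succ_succ, qbinom_zero_right]
    linear_combination X * ih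

theorem one_sub_X_pow_mul_qbinom_succ (n k : ℕ) :
    (1 - X ^ (k + 1)) * qbinom n (k + 1) = (1 - X ^ (n - k)) * qbinom n k := by
  induction n generalizing k with
  | zero => rw [qbinom_eq_zero_of_lt (Nat.succ_pos k), Nat.zero_sub]; ring
  | succ n ih =>
    cases k with
    | zero => simpa [qbinom_zero_right] using one_sub_X_mul_qbinom_one (n + 1)
    | succ k =>
      rcases lt_or_ge n (k + 1) with hnk | hkn
      · rw [qbinom_eq_zero_of_lt (by omega : n + 1 < k + 2)]
        obtain rfl | hnk := eq_or_lt_of_le (Nat.le_of_lt_succ hnk)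
        · simp
        · rw [qbinom_eq_zero_of_lt (by omega : n + 1 < k + 1)]; ring
      · have h₁ := ih (k + 1)
        have h₂ := ih k
        rw [show n - (k + 1) = n - k - 1 by omega] at h₁
        rw [show n - k = n - k - 1 + 1 by omega] at h₂
        rw [qbinom_succ_succ, qbinom_succ_succ, show n + 1 - (k + 1) = n - k - 1 + 1 by omega]
        linear_combination X ^ (k + 2) * h₁ + h₂

theorem qbinom_succ_mul_one_sub_X_pow (m k : ℕ) :
    qbinom (m + 1) k * (1 - X ^ (m + 1 - k)) = qbinom m k * (1 - X ^ (m + 1)) := by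
  cases k with
  | zero => simp [qbinom_zero_right]
  | succ k =>
    rcases lt_or_ge m k with hmk | hkm
    · rw [qbinom_eq_zero_of_lt (by omega : m + 1 < k + 1),
        qbinom_eq_zero_of_lt (by omega : m < k + 1), zero_mul, zero_mul]
    · refine mul_left_cancel₀ (one_sub_X_pow_ne_zero (by omega : 0 < k + 1)) ?_
      have h := one_sub_X_pow_mul_qbinom_succ m k
      rw [qbinom_succ_succ, show m + 1 - (k + 1) = m - k by omega]
      obtain ⟨t, rfl⟩ := Nat.exists_eq_add_of_le hkm
      rw [Nat.add_sub_cancel_left] at h ⊢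
      linear_combination (X ^ (k + 1) * (1 - X ^ t) - (1 - X ^ (k + 1 + t))) * h

lemma qbinom_eval_one (n k : ℕ) : (qbinom n k).eval 1 = n.choose k := by
  induction n generalizing k with
  | zero => cases k <;> simp [qbinom_zero_right, qbinom_eq_zero_of_lt]
  | succ n ih =>
    cases k with
    | zero => simp [qbinom_zero_right]
    | succ k => simp [qbinom_succ_succ, ih, Nat.choose_succ_succ]

lemma qbinom_eval_zero {n k : ℕ} (h : k ≤ n) : (qbinom n k).eval 0 = 1 := by
  induction n generalizing k with
  | zero => simp [Nat.le_zero.1 h, qbinom_zero_right]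
  | succ n ih =>
    cases k with
    | zero => simp [qbinom_zero_right]
    | succ k => simp [qbinom_succ_succ, ih (Nat.le_of_succ_le_succ h)]

lemma qint_eval_zero {m : ℕ} (hm : 0 < m) : (qint m).eval 0 = 1 := by
  obtain ⟨m, rfl⟩ := Nat.exists_eq_succ_of_ne_zero hm.ne'
  simp [qint, eval_finsetSum, Finset.sum_range_succ']

lemma qint_eval_one (m : ℕ) : (qint m).eval 1 = m := by
  simp [qint, eval_finsetSum]

lemma isRelPrime_X_of_eval_zero_ne_zero {R : Type*} [CommRing R] [IsDomain R] {M : R[X]}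
    (h : M.eval 0 ≠ 0) : IsRelPrime M X :=
  (irreducible_X.isRelPrime_iff_not_dvd.2 (by rwa [X_dvd_iff, coeff_zero_eq_eval_zero])).symm

lemma isRelPrime_one_sub_X_of_eval_one_ne_zero {R : Type*} [CommRing R] [IsDomain R] {M : R[X]}
    (h : M.eval 1 ≠ 0) : IsRelPrime M (1 - X) := by
  have hirr : Irreducible (1 - X : R[X]) :=
    (Associated.irreducible_iff ⟨-1, by simp⟩).1 (irreducible_X_sub_C 1)
  refine (hirr.isRelPrime_iff_not_dvd.2 ?_).symm
  rintro ⟨E, rfl⟩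
  simp at h

theorem exists_eq_toK_mul_of_one_sub_q_pow_mul_eq {M : ℤ[X]} (h0 : M.eval 0 ≠ 0)
    (h1 : M.eval 1 ≠ 0) {z g : K} (hz : z ∈ laurent) (hg : g ∈ laurent) {m : ℕ}
    (h : (1 - q) ^ m * z = toK M * g) :
    ∃ (P : ℤ[X]) (d : ℕ), z = toK M * (toK P * q ^ (-(d : ℤ))) := by
  obtain ⟨A, D, rfl⟩ := exists_eq_toK_mul_zpow_q hz
  obtain ⟨B, e, rfl⟩ := exists_eq_toK_mul_zpow_q hg
  have hpoly : X ^ e * ((1 - X) ^ m * A) = M * (B * X ^ D) := by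
    apply toK_injective
    have hq := q_ne_zero
    simp only [toK_mul, toK_sub, toK_one, toK_pow, toK_X]
    rw [zpow_neg, zpow_natCast, zpow_neg, zpow_natCast] at h
    field_simp at h
    linear_combination h
  obtain ⟨P, rfl⟩ := (isRelPrime_one_sub_X_of_eval_one_ne_zero h1).pow_right.dvd_of_dvd_mul_left
    ((isRelPrime_X_of_eval_zero_ne_zero h0).pow_right.dvd_of_dvd_mul_left ⟨_, hpoly⟩)
  exact ⟨P, D, by rw [toK_mul, mul_assoc]⟩

lemma one_sub_q_pow_ne_zero {m : ℕ} (hm : 0 < m) : (1 - q ^ m : K) ≠ 0 := by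
  simpa using toK_injective.ne (one_sub_X_pow_ne_zero hm)

lemma one_sub_q_mul_toK_qint (m : ℕ) : (1 - q) * toK (qint m) = 1 - q ^ m := by
  simpa [qint] using congrArg toK (mul_neg_geom_sum (X : ℤ[X]) m)

noncomputable def qdiff (n : ℕ) (ρ : ℤ → K) (k : ℤ) : K :=
  (1 - q ^ (n + 1) * q ^ k) * ρ k - (1 - q ^ n * (q ^ k)⁻¹) * ρ (k + 1)

theorem sum_qdiff_mul_qbinom (ρ : ℤ → K) {n a : ℕ} (ha : a ≤ n) :
    ∑ k ∈ Finset.Icc a n, qdiff n ρ k * toK (qbinom (2 * n + 1) (n - k)) =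
      (1 - q ^ (2 * n + 1)) * toK (qbinom (2 * n) (n - a)) * ρ a := by
  induction ha using Nat.decreasingInduction with
  | self =>
    simp only [Finset.Icc_self, Finset.sum_singleton, Nat.sub_self, qbinom_zero_right, toK_one,
      qdiff, zpow_natCast, mul_inv_cancel₀ (pow_ne_zero n q_ne_zero)]
    ring
  | of_succ a ha ih =>
    rw [Finset.Icc_eq_cons_Ioc ha.le, Finset.sum_cons, ← Finset.Icc_add_one_left_eq_Ioc, ih]
    have h₁ := congrArg toK (qbinom_succ_mul_one_sub_X_pow (2 * n) (n - a))
    have h₂ := congrArg toK (one_sub_X_pow_mul_qbinom_succ (2 * n) (n - (a + 1)))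
    rw [show 2 * n + 1 - (n - a) = n + a + 1 by omega] at h₁
    rw [show n - (a + 1) + 1 = n - a by omega, show 2 * n - (n - (a + 1)) = n + a + 1 by omega]
      at h₂
    simp only [toK_mul, toK_sub, toK_one, toK_pow, toK_X] at h₁ h₂
    have hq : q ^ n * (q ^ a)⁻¹ = q ^ (n - a) := by
      rw [← pow_sub₀ q q_ne_zero ha.le]
    refine mul_left_cancel₀ (one_sub_q_pow_ne_zero (by omega : 0 < n + a + 1)) ?_
    simp only [qdiff, zpow_natCast, hq, Nat.cast_add, Nat.cast_one]
    linear_combination ((1 - q ^ (n + 1) * q ^ a) * ρ a - (1 - q ^ (n - a)) * ρ (a + 1)) * h₁ -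
      ((1 - q ^ (2 * n + 1)) * ρ (a + 1)) * h₂

noncomputable def skewMon (j : ℕ) (k : ℤ) : K := (q ^ k)⁻¹ ^ j - (q * q ^ k) ^ j

noncomputable def symMon (k : ℤ) : K := (q ^ k)⁻¹ + q * q ^ k

lemma skewMon_zero : skewMon 0 = 0 := by
  ext; simp [skewMon]

lemma zpow_q_add_one (k : ℤ) : q ^ (k + 1) = q * q ^ k := by
  rw [zpow_add_one₀ q_ne_zero, mul_comm]

lemma qdiff_one (n : ℕ) : qdiff n 1 = q ^ n • skewMon 1 := by
  ext k
  simp only [qdiff, Pi.one_apply, Pi.smul_apply, smul_eq_mul, skewMon]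
  ring

lemma pow_q_smul_skewMon_add_two (n m : ℕ) :
    q ^ n • skewMon (m + 2) =
      q ^ (m + 1) • qdiff n (fun k => (q ^ k) ^ (m + 1) + (q ^ k)⁻¹ ^ (m + 1)) +
        (1 - q ^ (m + 1)) • skewMon (m + 1) + q ^ (n + m + 2) • skewMon m := by
  ext k
  have hk : q ^ k ≠ 0 := zpow_ne_zero k q_ne_zero
  simp only [qdiff, Pi.add_apply, Pi.smul_apply, smul_eq_mul, skewMon, zpow_q_add_one]
  generalize q ^ k = x at hk ⊢
  have hq := q_ne_zero
  simp only [inv_pow, mul_inv, mul_pow]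
  field_simp
  ring

lemma symMon_mul_skewMon (j : ℕ) :
    symMon * skewMon (j + 1) = skewMon (j + 2) + q • skewMon j := by
  ext k
  have hk : q ^ k ≠ 0 := zpow_ne_zero k q_ne_zero
  simp only [Pi.mul_apply, Pi.add_apply, Pi.smul_apply, smul_eq_mul, skewMon, symMon]
  generalize q ^ k = x at hk ⊢
  have hq := q_ne_zero
  simp only [inv_pow, mul_pow]
  field_simp
  ring

lemma smul_mem_of_mem_laurent {ι : Type*} {M : Submodule laurent (ι → K)} {c : K}
    (hc : c ∈ laurent) {f : ι → K} (hf : f ∈ M) : c • f ∈ M :=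
  M.smul_mem ⟨c, hc⟩ hf

noncomputable def laurentValued : Submodule laurent (ℤ → K) where
  carrier := {ρ | ∀ k, ρ k ∈ laurent}
  add_mem' hρ hσ k := add_mem (hρ k) (hσ k)
  zero_mem' _ := zero_mem _
  smul_mem' c _ hρ k := mul_mem c.2 (hρ k)

noncomputable def qdiffLinear (n : ℕ) : (ℤ → K) →ₗ[laurent] (ℤ → K) where
  toFun := qdiff n
  map_add' ρ σ := by ext k; simp only [qdiff, Pi.add_apply]; ring
  map_smul' c ρ := by
    ext k; simp only [qdiff, Pi.smul_apply, Subring.smul_def, smul_eq_mul, RingHom.id_apply]; ring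

lemma qdiff_mem_map_qdiffLinear (n : ℕ) {ρ : ℤ → K} (hρ : ∀ k, ρ k ∈ laurent) :
    qdiff n ρ ∈ laurentValued.map (qdiffLinear n) :=
  ⟨ρ, hρ, rfl⟩

theorem skewMon_mem_map_qdiffLinear (n j : ℕ) :
    skewMon j ∈ laurentValued.map (qdiffLinear n) := by
  have hinv : (q ^ n)⁻¹ ∈ laurent := by simpa using inv_zpow_q_mem_laurent n
  have hcancel (f : ℤ → K) : (q ^ n)⁻¹ • q ^ n • f = f := by
    rw [smul_smul, inv_mul_cancel₀ (pow_ne_zero n q_ne_zero), one_smul]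
  induction j using Nat.twoStepInduction with
  | zero =>
    rw [skewMon_zero]
    exact zero_mem _
  | one =>
    rw [← hcancel (skewMon 1), ← qdiff_one]
    exact smul_mem_of_mem_laurent hinv (qdiff_mem_map_qdiffLinear n fun _ => one_mem _)
  | more m ih₀ ih₁ =>
    rw [← hcancel (skewMon (m + 2)), pow_q_smul_skewMon_add_two]
    refine smul_mem_of_mem_laurent hinv (add_mem (add_mem ?_ ?_) ?_)
    · exact smul_mem_of_mem_laurent (pow_q_mem_laurent _) (qdiff_mem_map_qdiffLinear n fun k =>
        add_mem (pow_mem (zpow_q_mem_laurent k) _) (pow_mem (inv_zpow_q_mem_laurent k) _))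
    · exact smul_mem_of_mem_laurent (sub_mem (one_mem _) (pow_q_mem_laurent _)) ih₁
    · exact smul_mem_of_mem_laurent (pow_q_mem_laurent _) ih₀

noncomputable def skewSpan : Submodule laurent (ℤ → K) :=
  Submodule.span laurent (Set.range skewMon)

lemma skewSpan_le_map_qdiffLinear (n : ℕ) : skewSpan ≤ laurentValued.map (qdiffLinear n) :=
  Submodule.span_le.2 (Set.range_subset_iff.2 (skewMon_mem_map_qdiffLinear n))

lemma symMon_mul_mem_skewSpan {f : ℤ → K} (hf : f ∈ skewSpan) : symMon * f ∈ skewSpan := by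
  induction hf using Submodule.span_induction with
  | mem f hf =>
    obtain ⟨j | j, rfl⟩ := hf
    · rw [skewMon_zero, mul_zero]
      exact zero_mem _
    · rw [symMon_mul_skewMon]
      exact add_mem (Submodule.subset_span ⟨_, rfl⟩)
        (smul_mem_of_mem_laurent q_mem_laurent
          (Submodule.subset_span ⟨_, rfl⟩))
  | zero => rw [mul_zero]; exact zero_mem _
  | add f g _ _ hf hg => rw [mul_add]; exact add_mem hf hg
  | smul c f _ hf => rw [mul_smul_comm]; exact Submodule.smul_mem _ c hf

noncomputable def skewSpanMultipliers : Subring (ℤ → K) where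
  carrier := {g | ∀ f ∈ skewSpan, g * f ∈ skewSpan}
  mul_mem' hg hh f hf := by rw [mul_assoc]; exact hg _ (hh f hf)
  one_mem' f hf := by rwa [one_mul]
  add_mem' hg hh f hf := by rw [add_mul]; exact add_mem (hg f hf) (hh f hf)
  zero_mem' f _ := by rw [zero_mul]; exact zero_mem _
  neg_mem' hg f hf := by rw [neg_mul]; exact neg_mem (hg f hf)

lemma const_mem_skewSpanMultipliers {c : K} (hc : c ∈ laurent) :
    (fun _ => c) ∈ skewSpanMultipliers :=
  fun _ hf => smul_mem_of_mem_laurent hc hf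

lemma symMon_mem_skewSpanMultipliers : symMon ∈ skewSpanMultipliers :=
  fun _ hf => symMon_mul_mem_skewSpan hf

theorem one_sub_q_pow_mul_summand_eq (r s k : ℕ) :
    (1 - q) ^ (2 * r + 1) * (q ^ (-((2 * r + 1 : ℕ) : ℤ) * (k : ℤ)) *
        toK (qint (2 * k + 1)) ^ (2 * r + 1) * qpoch (-(k : ℤ)) s * qpoch ((k : ℤ) + 1) s) =
      skewMon 1 k * (symMon k ^ 2 - 4 * q) ^ r *
        ∏ i ∈ Finset.range s, (1 + q ^ (2 * i + 1) - q ^ i * symMon k) := by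
  have hk : q ^ (k : ℤ) ≠ 0 := zpow_ne_zero _ q_ne_zero
  have hqint : (1 - q) * toK (qint (2 * k + 1)) * (q ^ (k : ℤ))⁻¹ =
      (q ^ (k : ℤ))⁻¹ - q * q ^ (k : ℤ) := by
    rw [one_sub_q_mul_toK_qint, zpow_natCast]
    field_simp
    ring
  have hpow : q ^ (-((2 * r + 1 : ℕ) : ℤ) * (k : ℤ)) = (q ^ (k : ℤ))⁻¹ ^ (2 * r + 1) := by
    rw [← zpow_natCast, ← zpow_neg, ← zpow_mul]
    ring_nf
  have hpoch : qpoch (-(k : ℤ)) s * qpoch ((k : ℤ) + 1) s =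
      ∏ i ∈ Finset.range s, (1 - q ^ i * (q ^ (k : ℤ))⁻¹) * (1 - q ^ i * (q * q ^ (k : ℤ))) := by
    rw [qpoch, qpoch, ← Finset.prod_mul_distrib]
    refine Finset.prod_congr rfl fun i _ => ?_
    rw [zpow_add₀ q_ne_zero, zpow_add₀ q_ne_zero, zpow_q_add_one, zpow_neg, zpow_natCast q i]
    ring
  rw [hpow, mul_assoc _ _ (qpoch _ s), hpoch, skewMon, symMon]
  have hab : (q ^ (k : ℤ))⁻¹ * (q * q ^ (k : ℤ)) = q := by field_simp
  generalize (q ^ (k : ℤ))⁻¹ = y at hab hqint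
  generalize q ^ (k : ℤ) = x at hab hqint
  have hsq : (y - q * x) ^ 2 = (y + q * x) ^ 2 - 4 * q := by linear_combination (-4 : K) * hab
  have hfac (i : ℕ) : (1 - q ^ i * y) * (1 - q ^ i * (q * x)) =
      1 + q ^ (2 * i + 1) - q ^ i * (y + q * x) := by
    linear_combination q ^ (2 * i) * hab
  rw [Finset.prod_congr rfl fun i _ => hfac i, pow_one, pow_one, ← hsq, ← pow_mul, ← pow_succ',
    ← hqint, mul_pow, mul_pow]
  ring

theorem exists_mem_laurent_one_sub_q_pow_mul_sum_eq (n a r s : ℕ) (ha : a ≤ n) :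
    ∃ g ∈ laurent, (1 - q) ^ (2 * r) * ∑ k ∈ Finset.Icc a n,
        q ^ (-((2 * r + 1 : ℕ) : ℤ) * (k : ℤ)) * toK (qint (2 * k + 1)) ^ (2 * r + 1) *
          toK (qbinom (2 * n + 1) (n - k)) * qpoch (-(k : ℤ)) s * qpoch ((k : ℤ) + 1) s =
      toK (qint (2 * n + 1) * qbinom (2 * n) (n - a)) * g := by
  set w : ℤ → K := ((symMon ^ 2 - fun _ => 4 * q) ^ r * ∏ i ∈ Finset.range s,
    ((fun _ => 1 + q ^ (2 * i + 1)) - (fun _ => q ^ i) * symMon)) * skewMon 1 with hw_def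
  have hw : w ∈ skewSpan := by
    refine mul_mem (pow_mem (sub_mem (pow_mem symMon_mem_skewSpanMultipliers 2) ?_) r)
      (prod_mem fun i _ => sub_mem ?_ (mul_mem ?_ symMon_mem_skewSpanMultipliers)) _
      (Submodule.subset_span ⟨1, rfl⟩)
    · exact const_mem_skewSpanMultipliers (mul_mem (intCast_mem _ 4) q_mem_laurent)
    · exact const_mem_skewSpanMultipliers (add_mem (one_mem _) (pow_q_mem_laurent _))
    · exact const_mem_skewSpanMultipliers (pow_q_mem_laurent i)
  obtain ⟨ρ, hρ, hqdiff⟩ := skewSpan_le_map_qdiffLinear n hw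
  have h1q : (1 - q : K) ≠ 0 := by simpa using one_sub_q_pow_ne_zero one_pos
  refine ⟨ρ a, hρ a, mul_left_cancel₀ h1q ?_⟩
  calc (1 - q) * ((1 - q) ^ (2 * r) * _)
      = ∑ k ∈ Finset.Icc a n, qdiff n ρ k * toK (qbinom (2 * n + 1) (n - k)) := by
        rw [← mul_assoc, ← pow_succ', Finset.mul_sum]
        refine Finset.sum_congr rfl fun k _ => ?_
        rw [show qdiff n ρ k = w k from congrFun hqdiff k]
        simp only [hw_def, Pi.mul_apply, Pi.pow_apply, Pi.sub_apply, Finset.prod_apply]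
        linear_combination toK (qbinom (2 * n + 1) (n - k)) * one_sub_q_pow_mul_summand_eq r s k
    _ = (1 - q ^ (2 * n + 1)) * toK (qbinom (2 * n) (n - a)) * ρ a := sum_qdiff_mul_qbinom ρ ha
    _ = (1 - q) * (toK (qint (2 * n + 1) * qbinom (2 * n) (n - a)) * ρ a) := by
        rw [← one_sub_q_mul_toK_qint, toK_mul]; ring

theorem stmt16_general (n a r s : ℕ) (ha : a ≤ n) :
    ∃ (P : Polynomial ℤ) (d : ℕ),
      ∑ k ∈ Finset.Icc a n,
          q ^ (-((2 * r + 1 : ℕ) : ℤ) * (k : ℤ)) * toK (qint (2 * k + 1)) ^ (2 * r + 1) *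
            toK (qbinom (2 * n + 1) (n - k)) * qpoch (-(k : ℤ)) s * qpoch ((k : ℤ) + 1) s =
        toK (qint (2 * n + 1)) * toK (qbinom (2 * n) (n - a)) * (toK P * q ^ (-(d : ℤ))) := by
  obtain ⟨g, hg, h⟩ := exists_mem_laurent_one_sub_q_pow_mul_sum_eq n a r s ha
  have h0 : (qint (2 * n + 1) * qbinom (2 * n) (n - a)).eval 0 ≠ 0 := by
    simp [qint_eval_zero, qbinom_eval_zero (by omega : n - a ≤ 2 * n)]
  have h1 : (qint (2 * n + 1) * qbinom (2 * n) (n - a)).eval 1 ≠ 0 := by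
    simp [qint_eval_one, qbinom_eval_one, (Nat.choose_pos (by omega : n - a ≤ 2 * n)).ne']
    omega
  obtain ⟨P, d, hP⟩ := exists_eq_toK_mul_of_one_sub_q_pow_mul_eq h0 h1
    (sum_mem fun k _ => mul_mem (mul_mem (mul_mem (mul_mem (zpow_q_mem_laurent _)
      (pow_mem (toK_mem_laurent _) _)) (toK_mem_laurent _)) (qpoch_mem_laurent _ _))
      (qpoch_mem_laurent _ _)) hg h
  exact ⟨P, d, by rw [hP, toK_mul, mul_assoc]⟩

/-- Lemma 5.2 of the paper:
`∑_{k=a}^{n} q^{-(2r+1)k}·[2k+1]^{2r+1}·qbinom(2n+1, n-k)·(q^{-k};q)_s·(q^{k+1};q)_s`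
is divisible by `[2n+1]·qbinom(2n, n-a)` in `ℤ[q, q⁻¹]`, i.e. the quotient is a
Laurent polynomial in `q` with integer coefficients. -/
theorem stmt16 (n a r s : ℕ) (hn : 0 < n) (ha : a ≤ n) :
    ∃ (P : Polynomial ℤ) (d : ℕ),
      ∑ k ∈ Finset.Icc a n,
          q ^ (-((2 * r + 1 : ℕ) : ℤ) * (k : ℤ)) * toK (qint (2 * k + 1)) ^ (2 * r + 1) *
            toK (qbinom (2 * n + 1) (n - k)) * qpoch (-(k : ℤ)) s * qpoch ((k : ℤ) + 1) s =
        toK (qint (2 * n + 1)) * toK (qbinom (2 * n) (n - a)) * (toK P * q ^ (-(d : ℤ))) :=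
  stmt16_general n a r s ha
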